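/- Let 𝒮 ⊂ ℝⁿ be a compact set of positive Lebesgue measure and T a continuous probability density on 𝒮. Let (𝒫^{(m)})_{m∈ℕ} be a sequence of finite partitions of 𝒮 into measurable sets of positive Lebesgue measure (pairwise intersections of measure zero) whose maximum cell diameter tends to 0 as m → ∞, and let p^{(m)} be the discretization of T over 𝒫^{(m)}. Then KL_D(p^{(m)}‖p^{u,(m)}) → KL(T‖U) as m → ∞. -/

import Mathlib

/-!
Write `V = λ(𝒮)` and `φ x = x * log (x * V)`, continuous on `ℝ` as `x log x → 0` at `0`.
A cell of volume `ℓ` carrying mass `p` contributes `p * log (p * V / ℓ) = ℓ * φ (p / ℓ)` (both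
sides vanish when `ℓ = 0`), where `p / ℓ` is the average of `T` over the cell, while `KL(T‖U)` is
the sum over the cells of `∫ φ ∘ T`. By uniform continuity of `T` on `𝒮` and of `φ` on a ball
containing `T(𝒮)`, once the cells are fine enough `φ` of the cell average is `ε`-close to `φ ∘ T`
on the whole cell, so each cell contributes an error at most `ε ℓ`, and these add up to `ε V`.
-/

open MeasureTheory Real Filter Metric Function
open scoped ENNReal Topology

theorem continuous_mul_log_mul_const (c : ℝ) : Continuous fun x : ℝ => x * log (x * c) := by
  rcases eq_or_ne c 0 with rfl | hc
  · simpa using continuous_const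
  · have h : (fun x : ℝ => x * log (x * c)) = fun x => c⁻¹ * ((x * c) * log (x * c)) := by
      funext x; field_simp
    rw [h]
    exact continuous_const.mul (continuous_mul_log.comp (continuous_id.mul continuous_const))

theorem mul_log_mul_div_eq (p c l : ℝ) :
    p * log (p * c / l) = l * (l⁻¹ * p * log (l⁻¹ * p * c)) := by
  rcases eq_or_ne l 0 with rfl | hl
  · simp
  · rw [← mul_assoc, mul_inv_cancel_left₀ hl, inv_mul_eq_div, div_mul_eq_mul_div]

section

variable {X E F : Type*} [MeasurableSpace X] {μ : Measure X}
  [NormedAddCommGroup E] [NormedSpace ℝ E] [NormedAddCommGroup F] [NormedSpace ℝ F]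

theorem setIntegral_eq_sum_of_iUnion_eq {ι : Type*} [Fintype ι] {S : Set X} {c : ι → Set X}
    (hmeas : ∀ i, MeasurableSet (c i)) (hdisj : Pairwise (AEDisjoint μ on c))
    (hcover : ⋃ i, c i = S) {h : X → F} (hh : IntegrableOn h S μ) :
    ∫ s in S, h s ∂μ = ∑ i, ∫ s in c i, h s ∂μ := by
  subst hcover
  rw [integral_iUnion_ae (fun i => (hmeas i).nullMeasurableSet) hdisj hh, tsum_fintype]

variable [CompleteSpace E] [CompleteSpace F]

theorem setAverage_mem_closedBall {A : Set X} (hA : MeasurableSet A) (h0 : μ A ≠ 0)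
    (hAfin : μ A ≠ ∞) {f : X → E} (hf : IntegrableOn f A μ) {c : E} {r : ℝ}
    (hfA : ∀ s ∈ A, f s ∈ closedBall c r) : ⨍ s in A, f s ∂μ ∈ closedBall c r :=
  (convex_closedBall c r).set_average_mem isClosed_closedBall h0 hAfin
    (ae_restrict_of_forall_mem hA hfA) hf

theorem norm_measureReal_smul_sub_setIntegral_le {A : Set X} (hA : μ A ≠ ∞) {h : X → F}
    (hh : IntegrableOn h A μ) {c : F} {ε : ℝ} (hc : ∀ s ∈ A, ‖c - h s‖ ≤ ε) :
    ‖μ.real A • c - ∫ s in A, h s ∂μ‖ ≤ ε * μ.real A := by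
  have hc_int : IntegrableOn (fun _ => c) A μ := integrableOn_const hA
  rw [← setIntegral_const, ← integral_sub hc_int hh]
  exact norm_setIntegral_le_of_norm_le_const hA.lt_top hc

variable [MetricSpace X] [ProperSpace E] [OpensMeasurableSpace X] [IsFiniteMeasureOnCompacts μ]

theorem exists_pos_norm_measureReal_smul_sub_setIntegral_le {S : Set X} (hS : IsCompact S)
    {f : X → E} (hf : ContinuousOn f S) {g : E → F} (hg : Continuous g) {ε : ℝ} (hε : 0 < ε) :
    ∃ δ > 0, ∀ A ⊆ S, MeasurableSet A → ediam A ≤ ENNReal.ofReal δ →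
      ‖μ.real A • g (⨍ s in A, f s ∂μ) - ∫ s in A, g (f s) ∂μ‖ ≤ ε * μ.real A := by
  obtain ⟨M, hM⟩ := hS.exists_bound_of_continuousOn hf
  obtain ⟨η, hη, hgη⟩ := uniformContinuousOn_iff_le.1
    ((isCompact_closedBall (0 : E) M).uniformContinuousOn_of_continuous hg.continuousOn) ε hε
  obtain ⟨δ, hδ, hfδ⟩ := uniformContinuousOn_iff_le.1
    (hS.uniformContinuousOn_of_continuous hf) η hη
  refine ⟨δ, hδ, fun A hAS hA hdiam => ?_⟩
  rcases eq_or_ne (μ A) 0 with h0 | h0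
  · simp [Measure.real, h0, Measure.restrict_eq_zero.2 h0]
  have hAfin : μ A ≠ ∞ := (measure_mono hAS).trans_lt hS.measure_lt_top |>.ne
  have hfA : IntegrableOn f A μ := (hf.integrableOn_compact hS).mono_set hAS
  have hgfA : IntegrableOn (fun s => g (f s)) A μ :=
    ((hg.comp_continuousOn hf).integrableOn_compact hS).mono_set hAS
  have hbound : ∀ s ∈ A, f s ∈ closedBall 0 M := fun s hs =>
    mem_closedBall_zero_iff.2 (hM s (hAS hs))
  refine norm_measureReal_smul_sub_setIntegral_le hAfin hgfA fun s hs => ?_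
  have hnear : ∀ u ∈ A, f u ∈ closedBall (f s) η := fun u hu =>
    hfδ u (hAS hu) s (hAS hs)
      ((edist_le_ofReal hδ.le).1 ((edist_le_ediam_of_mem hu hs).trans hdiam))
  rw [← dist_eq_norm]
  exact hgη _ (setAverage_mem_closedBall hA h0 hAfin hfA hbound) _ (hbound s hs)
    (setAverage_mem_closedBall hA h0 hAfin hfA hnear)

theorem tendsto_sum_measureReal_smul_setAverage {S : Set X} (hS : IsCompact S)
    {f : X → E} (hf : ContinuousOn f S) {g : E → F} (hg : Continuous g)
    {N : ℕ → ℕ} {cell : (m : ℕ) → Fin (N m) → Set X} (hmeas : ∀ m i, MeasurableSet (cell m i))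
    (hcover : ∀ m, ⋃ i, cell m i = S) (hdisj : ∀ m, Pairwise (AEDisjoint μ on cell m))
    (hmesh : Tendsto (fun m => ⨆ i, ediam (cell m i)) atTop (𝓝 0)) :
    Tendsto (fun m => ∑ i, μ.real (cell m i) • g (⨍ s in cell m i, f s ∂μ)) atTop
      (𝓝 (∫ s in S, g (f s) ∂μ)) := by
  have hsub : ∀ m i, cell m i ⊆ S := fun m i => hcover m ▸ Set.subset_iUnion _ i
  have hvol : ∀ m, ∑ i, μ.real (cell m i) = μ.real S := fun m => by
    simpa using (setIntegral_eq_sum_of_iUnion_eq (hmeas m) (hdisj m) (hcover m)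
      (integrableOn_const (C := (1 : ℝ)) hS.measure_lt_top.ne)).symm
  refine Metric.tendsto_nhds.2 fun ε hε => ?_
  have hC : 0 < μ.real S + 1 := by positivity
  obtain ⟨δ, hδ, hloc⟩ := exists_pos_norm_measureReal_smul_sub_setIntegral_le (μ := μ) hS hf hg
    (div_pos hε hC)
  filter_upwards [hmesh.eventually_lt_const (ENNReal.ofReal_pos.2 hδ)] with m hm
  have hdiam : ∀ i, ediam (cell m i) ≤ ENNReal.ofReal δ := fun i =>
    (le_iSup (fun j => ediam (cell m j)) i).trans hm.le
  rw [setIntegral_eq_sum_of_iUnion_eq (hmeas m) (hdisj m) (hcover m)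
    (h := fun s => g (f s)) ((hg.comp_continuousOn hf).integrableOn_compact hS), dist_eq_norm,
    ← Finset.sum_sub_distrib]
  calc ‖∑ i, (μ.real (cell m i) • g (⨍ s in cell m i, f s ∂μ) - ∫ s in cell m i, g (f s) ∂μ)‖
      ≤ ∑ i, ε / (μ.real S + 1) * μ.real (cell m i) :=
        norm_sum_le_of_le _ fun i _ => hloc _ (hsub m i) (hmeas m i) (hdiam i)
    _ = ε / (μ.real S + 1) * μ.real S := by rw [← Finset.mul_sum, hvol]
    _ < ε := by
        rw [div_mul_eq_mul_div, div_lt_iff₀ hC]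
        nlinarith

end

theorem discretized_kl_tendsto_kl_general
    (n : ℕ)
    (𝒮 : Set (Fin n → ℝ))
    (hcomp : IsCompact 𝒮)
    (T : (Fin n → ℝ) → ℝ)
    (hTcont : ContinuousOn T 𝒮)
    -- the sequence of partitions
    (N : ℕ → ℕ)
    (cell : (m : ℕ) → Fin (N m) → Set (Fin n → ℝ))
    (hmeas : ∀ m i, MeasurableSet (cell m i))
    (hcover : ∀ m, (⋃ i, cell m i) = 𝒮)
    (hdisj : ∀ m, ∀ i j : Fin (N m), i ≠ j → volume (cell m i ∩ cell m j) = 0)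
    -- maximum cell diameter tends to 0
    (hmesh : Tendsto (fun m => ⨆ i : Fin (N m), EMetric.diam (cell m i)) atTop (nhds 0)) :
    Tendsto
      (fun m => ∑ i : Fin (N m),
        (∫ s in cell m i, T s) *
          Real.log ((∫ s in cell m i, T s) * (volume 𝒮).toReal / (volume (cell m i)).toReal))
      atTop
      (nhds (∫ s in 𝒮, T s * Real.log (T s * (volume 𝒮).toReal))) := by
  convert tendsto_sum_measureReal_smul_setAverage hcomp hTcont
    (continuous_mul_log_mul_const (volume 𝒮).toReal) hmeas hcover hdisj hmesh using 3 with m i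
  rw [setAverage_eq, smul_eq_mul, smul_eq_mul, mul_log_mul_div_eq]
  rfl

/-- convergence of the discretized KL divergence to uniform: along any
sequence of partitions whose maximum cell diameter tends to `0`, the discrete KL
divergence to uniform of the discretization of `T` converges to `KL(T‖U)`. -/
theorem discretized_kl_tendsto_kl
    (n : ℕ)
    (𝒮 : Set (Fin n → ℝ))
    (hcomp : IsCompact 𝒮) (hpos : 0 < volume 𝒮)
    (T : (Fin n → ℝ) → ℝ)
    (hTcont : ContinuousOn T 𝒮)
    (hTnonneg : ∀ s ∈ 𝒮, 0 ≤ T s)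
    (hTint : (∫ s in 𝒮, T s) = 1)
    -- the sequence of partitions
    (N : ℕ → ℕ)
    (cell : (m : ℕ) → Fin (N m) → Set (Fin n → ℝ))
    (hmeas : ∀ m i, MeasurableSet (cell m i))
    (hcellpos : ∀ m i, 0 < volume (cell m i))
    (hcover : ∀ m, (⋃ i, cell m i) = 𝒮)
    (hdisj : ∀ m, ∀ i j : Fin (N m), i ≠ j → volume (cell m i ∩ cell m j) = 0)
    -- maximum cell diameter tends to 0
    (hmesh : Tendsto (fun m => ⨆ i : Fin (N m), EMetric.diam (cell m i)) atTop (nhds 0)) :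
    Tendsto
      (fun m => ∑ i : Fin (N m),
        (∫ s in cell m i, T s) *
          Real.log ((∫ s in cell m i, T s) * (volume 𝒮).toReal / (volume (cell m i)).toReal))
      atTop
      (nhds (∫ s in 𝒮, T s * Real.log (T s * (volume 𝒮).toReal))) :=
  discretized_kl_tendsto_kl_general n 𝒮 hcomp T hTcont N cell hmeas hcover hdisj hmesh
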